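/- arXiv:1212.4600 — 4 statements merged into one kernel-verified Lean document; each statement's English description precedes it below -/
import Mathlib

section
/- Let F be an algebraically closed field of characteristic zero and n ≥ 2. Let p be a commutative polynomial in the n² entries of an n×n matrix. If for every X ∈ M_n(F) and every S ∈ GL_n(F) one has p(SXS⁻¹) = 0 if and only if p(X) = 0, then p is a matrix invariant: p(SXS⁻¹) = p(X) for every X ∈ M_n(F) and every S ∈ GL_n(F). -/
/-!
Fix `X` with `p(X) ≠ 0` and a transvection `T(t) = 1 + t E_ij`. Since `T(t)⁻¹ = T(-t)`, the map
`t ↦ p(T(t) X T(t)⁻¹)` is a polynomial in `t`, and by hypothesis it has no zero; over an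
algebraically closed field it is therefore constant, equal to its value `p(X)` at `t = 0`. So
the invertible `S` with `p(S X S⁻¹) = p(X)` for all `X` form a subgroup of `GL_n` containing the
transvections (on the zero set of `p` this is the hypothesis again) and the scalars. Every
matrix of determinant `1` is a product of transvections, and every invertible matrix is a scalar
times one of determinant `1`, taking an `n`-th root of its determinant.
-/

open Matrix

/-- Evaluation of a commutative polynomial in the `n²` matrix entries at a matrix. -/
noncomputable def evalMat {F : Type} [Field F] {n : ℕ}
    (p : MvPolynomial (Fin n × Fin n) F) (X : Matrix (Fin n) (Fin n) F) : F :=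
  MvPolynomial.eval (fun ij : Fin n × Fin n => X ij.1 ij.2) p

open Polynomial

theorem MvPolynomial.eval_polynomial_eval_eq_of_ne_zero {σ F : Type*} [Field F] [IsAlgClosed F]
    (p : MvPolynomial σ F) (g : σ → F[X]) (h : ∀ t, eval (fun s ↦ (g s).eval t) p ≠ 0)
    (t u : F) :
    eval (fun s ↦ (g s).eval t) p = eval (fun s ↦ (g s).eval u) p := by
  have eval_aeval (t : F) : (aeval g p).eval t = eval (fun s ↦ (g s).eval t) p := by
    rw [← Polynomial.coe_aeval_eq_eval, ← coe_aeval_eq_eval, ← AlgHom.comp_apply, comp_aeval]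
    rfl
  set q := aeval g p
  have hq : q = Polynomial.C (q.coeff 0) := IsAlgClosed.roots_eq_zero_iff.mp <|
    Multiset.eq_zero_of_forall_notMem fun t ht ↦
      h t (by rw [← eval_aeval]; exact (mem_roots'.mp ht).2)
  rw [← eval_aeval, ← eval_aeval, hq, Polynomial.eval_C, Polynomial.eval_C]

def Units.conjStabilizer {M β : Type*} [Monoid M] (f : M → β) : Subgroup Mˣ where
  carrier := {u | ∀ x, f (u * x * ↑u⁻¹) = f x}
  one_mem' x := by simp
  mul_mem' {u v} hu hv x := by
    rw [_root_.mul_inv_rev, Units.val_mul, Units.val_mul, ← hv x, ← hu (v * x * ↑v⁻¹)]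
    simp only [mul_assoc]
  inv_mem' {u} hu x := by
    rw [← hu, inv_inv]
    simp only [mul_assoc, Units.mul_inv_cancel_left, Units.mul_inv, mul_one]

theorem Units.mem_conjStabilizer_of_commute {M β : Type*} [Monoid M] (f : M → β) {u : Mˣ}
    (hu : ∀ x, Commute (u : M) x) : u ∈ Units.conjStabilizer f := fun x ↦ by
  rw [(hu x).eq, Units.mul_inv_cancel_right]

namespace Matrix

variable {ι : Type*} [DecidableEq ι]

theorem transvection_map {R S : Type*} [CommRing R] [CommRing S] (f : R →+* S) (i j : ι)
    (c : R) : (transvection i j c).map f = transvection i j (f c) := by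
  rw [transvection, transvection, Matrix.map_add _ f.map_add,
    Matrix.map_one f f.map_zero f.map_one, map_single]

variable [Fintype ι] {F : Type*} [Field F]

theorem diagonal_eq_transvection_prod {i j : ι} (hij : i ≠ j) {a : F} (ha : a ≠ 0) :
    diagonal (fun k ↦ if k = i then a else if k = j then a⁻¹ else 1) =
      transvection i j a * transvection j i (-a⁻¹) * transvection i j a *
        transvection i j (-1) * transvection j i 1 * transvection i j (-1) := by
  ext k l
  rcases eq_or_ne l i with rfl | hli <;> rcases eq_or_ne l j with rfl | hlj
  · exact absurd rfl hij
  all_goals simp [*, hij.symm, diagonal_apply]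
  all_goals simp [transvection, one_apply, single_apply]
  all_goals grind

theorem SpecialLinearGroup.diag2n_eq_transvection_prod {i j : ι} (hij : i ≠ j) {a : F}
    (ha : a ≠ 0) :
    diag2n hij a ha = transvection hij a * transvection hij.symm (-a⁻¹) * transvection hij a *
      transvection hij (-1) * transvection hij.symm 1 * transvection hij (-1) :=
  Subtype.ext (diagonal_eq_transvection_prod hij ha)

theorem SpecialLinearGroup.toGL_mem_of_transvection_mem [Nontrivial ι] {H : Subgroup (GL ι F)}
    (htransvection : ∀ (i j : ι) (hij : i ≠ j) (c : F), toGL (transvection hij c) ∈ H)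
    (A : SpecialLinearGroup ι F) : toGL A ∈ H := by
  refine diagonal_transvection_induction' (toGL · ∈ H) A (fun i j hij c hc ↦ ?_) htransvection
    (fun A B hA hB ↦ by rw [map_mul]; exact H.mul_mem hA hB)
  simp only [diag2n_eq_transvection_prod, map_mul]
  repeat' apply H.mul_mem
  all_goals apply htransvection

theorem GeneralLinearGroup.eq_top_of_scalar_mem_of_transvection_mem [Nontrivial ι]
    [IsAlgClosed F] {H : Subgroup (GL ι F)} (hscalar : ∀ u, GeneralLinearGroup.scalar ι u ∈ H)
    (htransvection : ∀ (i j : ι) (hij : i ≠ j) (c : F),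
      SpecialLinearGroup.toGL (SpecialLinearGroup.transvection hij c) ∈ H) :
    H = ⊤ := by
  refine eq_top_iff.mpr fun S _ ↦ ?_
  obtain ⟨c, hc⟩ :=
    IsAlgClosed.exists_pow_nat_eq (S : Matrix ι ι F).det (Fintype.card_pos (α := ι))
  have hc0 : c ≠ 0 := by
    rintro rfl
    rw [zero_pow Fintype.card_ne_zero] at hc
    exact (GeneralLinearGroup.det S).ne_zero hc.symm
  have hdet : (c⁻¹ • (S : Matrix ι ι F)).det = 1 := by
    rw [det_smul, ← hc, inv_pow, inv_mul_cancel₀ (pow_ne_zero _ hc0)]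
  have hS : S = GeneralLinearGroup.scalar ι (Units.mk0 c hc0) *
      SpecialLinearGroup.toGL ⟨_, hdet⟩ := by
    ext : 1
    change (S : Matrix ι ι F) = Matrix.scalar ι c * (c⁻¹ • (S : Matrix ι ι F))
    rw [scalar_apply, ← smul_eq_diagonal_mul, smul_smul, mul_inv_cancel₀ hc0, one_smul]
  rw [hS]
  exact H.mul_mem (hscalar _) (SpecialLinearGroup.toGL_mem_of_transvection_mem htransvection _)

theorem transvection_conj_eq_map_eval {i j : ι} (hij : i ≠ j) (A : Matrix ι ι F) (t : F) :
    (SpecialLinearGroup.toGL (SpecialLinearGroup.transvection hij t) : Matrix ι ι F) * A *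
        ((SpecialLinearGroup.toGL (SpecialLinearGroup.transvection hij t))⁻¹ : GL ι F) =
      (transvection i j (X : F[X]) * A.map C * transvection i j (-X)).map (evalRingHom t) := by
  rw [← map_inv, SpecialLinearGroup.transvection_inv, Matrix.map_mul, Matrix.map_mul,
    transvection_map, transvection_map, Matrix.map_map]
  simp only [SpecialLinearGroup.coe_GL_coe_matrix, coe_evalRingHom, eval_X, eval_neg, eval_C,
    Function.comp_def, map_id']
  rfl

end Matrix

theorem transvection_mem_conjStabilizer_evalMat {F : Type} [Field F] [IsAlgClosed F] {n : ℕ}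
    {p : MvPolynomial (Fin n × Fin n) F}
    (hp : ∀ (X : Matrix (Fin n) (Fin n) F) (S : (Matrix (Fin n) (Fin n) F)ˣ),
      evalMat p ((S : Matrix (Fin n) (Fin n) F) * X *
        ((S⁻¹ : (Matrix (Fin n) (Fin n) F)ˣ) : Matrix (Fin n) (Fin n) F)) = 0 ↔
      evalMat p X = 0)
    {i j : Fin n} (hij : i ≠ j) (c : F) :
    SpecialLinearGroup.toGL (SpecialLinearGroup.transvection hij c) ∈
      Units.conjStabilizer (evalMat p) := by
  intro A
  by_cases hA : evalMat p A = 0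
  · rw [hA]
    exact (hp A _).mpr hA
  set M : Matrix (Fin n) (Fin n) F[X] := transvection i j X * A.map C * transvection i j (-X)
  have hcurve (t : F) :
      evalMat p ((SpecialLinearGroup.toGL (SpecialLinearGroup.transvection hij t) :
          Matrix (Fin n) (Fin n) F) * A *
        ((SpecialLinearGroup.toGL (SpecialLinearGroup.transvection hij t))⁻¹ : GL (Fin n) F)) =
      MvPolynomial.eval (fun kl ↦ (M kl.1 kl.2).eval t) p := by
    rw [transvection_conj_eq_map_eval]
    rfl
  rw [hcurve, MvPolynomial.eval_polynomial_eval_eq_of_ne_zero p _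
    (fun t ↦ hcurve t ▸ mt (hp A _).mp hA) c 0, ← hcurve]
  simp only [SpecialLinearGroup.transvection_coeff_zero, map_one, inv_one, Units.val_one,
    one_mul, mul_one]

theorem zero_set_conj_iff_matrix_invariant_general (F : Type) [Field F] [IsAlgClosed F]
    (n : ℕ) (hn : 2 ≤ n) (p : MvPolynomial (Fin n × Fin n) F)
    (h : ∀ (X : Matrix (Fin n) (Fin n) F) (S : (Matrix (Fin n) (Fin n) F)ˣ),
      evalMat p ((S : Matrix (Fin n) (Fin n) F) * X *
        ((S⁻¹ : (Matrix (Fin n) (Fin n) F)ˣ) : Matrix (Fin n) (Fin n) F)) = 0 ↔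
      evalMat p X = 0) :
    ∀ (X : Matrix (Fin n) (Fin n) F) (S : (Matrix (Fin n) (Fin n) F)ˣ),
      evalMat p ((S : Matrix (Fin n) (Fin n) F) * X *
        ((S⁻¹ : (Matrix (Fin n) (Fin n) F)ˣ) : Matrix (Fin n) (Fin n) F)) =
      evalMat p X := by
  have : Nontrivial (Fin n) := Fin.nontrivial_iff_two_le.mpr hn
  have htop : Units.conjStabilizer (evalMat p) = ⊤ :=
    GeneralLinearGroup.eq_top_of_scalar_mem_of_transvection_mem
      (fun u ↦ Units.mem_conjStabilizer_of_commute _ fun _ ↦ scalar_commute _ (Commute.all _) _)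
      (fun _ _ hij c ↦ transvection_mem_conjStabilizer_evalMat h hij c)
  intro X S
  exact (htop ▸ Subgroup.mem_top S : S ∈ Units.conjStabilizer (evalMat p)) X

theorem zero_set_conj_iff_matrix_invariant (F : Type) [Field F] [IsAlgClosed F]
    [CharZero F] (n : ℕ) (hn : 2 ≤ n) (p : MvPolynomial (Fin n × Fin n) F)
    (h : ∀ (X : Matrix (Fin n) (Fin n) F) (S : (Matrix (Fin n) (Fin n) F)ˣ),
      evalMat p ((S : Matrix (Fin n) (Fin n) F) * X *
        ((S⁻¹ : (Matrix (Fin n) (Fin n) F)ˣ) : Matrix (Fin n) (Fin n) F)) = 0 ↔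
      evalMat p X = 0) :
    ∀ (X : Matrix (Fin n) (Fin n) F) (S : (Matrix (Fin n) (Fin n) F)ˣ),
      evalMat p ((S : Matrix (Fin n) (Fin n) F) * X *
        ((S⁻¹ : (Matrix (Fin n) (Fin n) F)ˣ) : Matrix (Fin n) (Fin n) F)) =
      evalMat p X :=
  zero_set_conj_iff_matrix_invariant_general F n hn p h
end

section
/- Let F be an algebraically closed field of characteristic zero and n ≥ 2. Let Z be a proper subset of M_n(F) that is Zariski closed (i.e., Z is the common zero set of a family of commutative polynomials in the n² matrix entries) and closed under conjugation by GL_n(F). Then there exists a nonzero commutative polynomial g in n variables over F such that g(φ(X)) = 0 for every X ∈ Z, where φ : M_n(F) → F^n sends a matrix to the tuple (α_1,…,α_n) of coefficients of its characteristic polynomial x^n + α_1 x^{n-1} + ⋯ + α_n. -/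
/-!
A matrix with pairwise distinct eigenvalues `μ` is conjugate to `diagonal μ`, so a
conjugation-invariant `Z` contains it iff it contains `diagonal μ`. If some defining polynomial `q`
of `Z` does not vanish on all diagonal matrices, let `q_diag` be its restriction to them and
`H = ∏_{σ ∈ S_n} σ · (Δ · q_diag)` with `Δ = ∏_{i ≠ j} (x_i - x_j)`. Then `H` is a nonzero
symmetric polynomial vanishing at the eigenvalues `μ` of every `X ∈ Z` (either `μ` has a repeated
entry, or `diagonal μ ∈ Z`), and by the fundamental theorem of symmetric polynomials and Vieta's
formulas `H(μ) = g(φ(X))` for a nonzero `g`.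

Otherwise `Z` contains every diagonal matrix, hence every `X` with `D(X) ≠ 0`, where
`D(X) = (∏_σ σ · Δ)(μ)` is a nonzero polynomial in the entries of `X`. So `q · D = 0` for every
defining `q`, and `Z` is everything.
-/

open Matrix

/-- The map `φ : M_n(F) → F^n` sending a matrix to the coefficients `(α_1, …, α_n)` of its
characteristic polynomial `x^n + α_1 x^{n-1} + ⋯ + α_n`; so `α_{k+1}` is the coefficient
of `x^{n-(k+1)}`. -/
noncomputable def phiMap {F : Type} [Field F] {n : ℕ} (X : Matrix (Fin n) (Fin n) F) :
    Fin n → F :=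
  fun k => X.charpoly.coeff (n - ((k : ℕ) + 1))

namespace MvPolynomial

variable {R σ τ : Type*} [CommRing R]

lemma eval_aeval (x : τ → R) (f : σ → MvPolynomial τ R) (p : MvPolynomial σ R) :
    eval x (aeval f p) = eval (fun i => eval x (f i)) p :=
  comp_aeval_apply (f := f) (aeval x) p

variable [Fintype σ] [DecidableEq σ]

noncomputable def permProd (p : MvPolynomial σ R) : MvPolynomial σ R :=
  ∏ e : Equiv.Perm σ, rename e p

lemma permProd_isSymmetric (p : MvPolynomial σ R) : (permProd p).IsSymmetric := by
  intro τ
  simp only [permProd, map_prod, rename_rename]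
  exact Equiv.prod_comp (Equiv.mulLeft τ) fun e : Equiv.Perm σ => rename e p

lemma eval_permProd (x : σ → R) (p : MvPolynomial σ R) :
    eval x (permProd p) = ∏ e : Equiv.Perm σ, eval (x ∘ e) p := by
  simp [permProd, eval_rename]

lemma eval_permProd_eq_zero_of_eval_eq_zero {x : σ → R} {p : MvPolynomial σ R}
    (hp : eval x p = 0) : eval x (permProd p) = 0 := by
  rw [eval_permProd]
  exact Finset.prod_eq_zero (Finset.mem_univ 1) hp

lemma permProd_ne_zero [IsDomain R] {p : MvPolynomial σ R} (hp : p ≠ 0) : permProd p ≠ 0 :=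
  Finset.prod_ne_zero_iff.mpr fun e _ =>
    (map_ne_zero_iff _ (rename_injective _ e.injective)).mpr hp

noncomputable def diffProd (σ R : Type*) [CommRing R] [Fintype σ] [DecidableEq σ] :
    MvPolynomial σ R :=
  ∏ ij ∈ Finset.univ.offDiag, (X ij.1 - X ij.2)

lemma eval_diffProd_eq_zero_iff [IsDomain R] {x : σ → R} :
    eval x (diffProd σ R) = 0 ↔ ¬Function.Injective x := by
  simp [diffProd, Finset.prod_eq_zero_iff, sub_eq_zero, Function.not_injective_iff, and_comm]

lemma diffProd_ne_zero [IsDomain R] [Infinite R] : diffProd σ R ≠ 0 := by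
  have hx : Function.Injective (Infinite.natEmbedding R ∘ Fin.val ∘ Fintype.equivFin σ) :=
    (Infinite.natEmbedding R).injective.comp
      (Fin.val_injective.comp (Fintype.equivFin σ).injective)
  exact fun h => eval_diffProd_eq_zero_iff.mp (by rw [h, map_zero]) hx

end MvPolynomial

section Diagonalization

open Polynomial

variable {K : Type*} [Field K]

lemma Polynomial.Splits.exists_fin_eq_prod_X_sub_C {n : ℕ} {p : K[X]} (hsplit : p.Splits)
    (hmonic : p.Monic) (hdeg : p.natDegree = n) : ∃ μ : Fin n → K, p = ∏ i, (X - C (μ i)) := by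
  set l := p.roots.toList
  have hl : l.length = n := by
    rw [Multiset.length_toList, splits_iff_card_roots.mp hsplit, hdeg]
  refine ⟨fun i => l[(Fin.cast hl.symm i : ℕ)], ?_⟩
  rw [Fin.prod_congr' (fun i : Fin l.length => X - C l[(i : ℕ)]) hl.symm,
    Fin.prod_univ_fun_getElem l (fun a => X - C a), ← Multiset.prod_coe, ← Multiset.map_coe,
    Multiset.coe_toList]
  exact hsplit.eq_prod_roots_of_monic hmonic

lemma Matrix.exists_charpoly_eq_prod [IsAlgClosed K] {n : ℕ} (A : Matrix (Fin n) (Fin n) K) :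
    ∃ μ : Fin n → K, A.charpoly = ∏ i, (X - C (μ i)) :=
  (IsAlgClosed.splits _).exists_fin_eq_prod_X_sub_C A.charpoly_monic
    (by rw [charpoly_natDegree_eq_dim, Fintype.card_fin])

variable {ι : Type*} [Fintype ι] [DecidableEq ι]

lemma Matrix.exists_units_eq_conj_diagonal {A : Matrix ι ι K} {μ : ι → K}
    (hμ : Function.Injective μ) (hA : A.charpoly = ∏ i, (X - C (μ i))) :
    ∃ u : (Matrix ι ι K)ˣ, A = (u : Matrix ι ι K) * diagonal μ * (↑u⁻¹ : Matrix ι ι K) := by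
  have hroot (i : ι) : Module.End.HasEigenvalue (toLin' A) (μ i) := by
    rw [Module.End.hasEigenvalue_iff_isRoot_charpoly, charpoly_toLin', hA, IsRoot, eval_prod]
    exact Finset.prod_eq_zero (Finset.mem_univ i) (by simp)
  choose v hv using fun i => (hroot i).exists_hasEigenvector
  set P : Matrix ι ι K := Matrix.of fun i j => v j i
  have hP : IsUnit P := linearIndependent_cols_iff_isUnit.mp
    (Module.End.eigenvectors_linearIndependent' _ μ hμ v hv)
  have hAP : A * P = P * diagonal μ := by
    ext i j
    have := congrFun (hv j).apply_eq_smul i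
    simp only [toLin'_apply, mulVec, dotProduct, Pi.smul_apply, smul_eq_mul] at this
    rw [mul_diagonal]
    simp [P, mul_apply, this, mul_comm]
  refine ⟨hP.unit, ?_⟩
  rw [← hP.unit_spec] at hAP
  rw [← hAP, Units.mul_inv_cancel_right]

end Diagonalization

section CharpolyCoefficients

open MvPolynomial

variable {F : Type} [Field F] {n : ℕ}

lemma phiMap_eq_neg_one_pow_mul_esymm {A : Matrix (Fin n) (Fin n) F} {μ : Fin n → F}
    (hA : A.charpoly = ∏ i, (Polynomial.X - Polynomial.C (μ i))) (k : Fin n) :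
    phiMap A k = (-1) ^ ((k : ℕ) + 1) * eval μ (esymm (Fin n) F ((k : ℕ) + 1)) := by
  have hcard : Multiset.card (Finset.univ.val.map μ) = n := by simp
  have hprod : ∏ i, (Polynomial.X - Polynomial.C (μ i))
      = ((Finset.univ.val.map μ).map fun t => Polynomial.X - Polynomial.C t).prod := by
    rw [Multiset.map_map]; rfl
  rw [phiMap, hA, hprod, Multiset.prod_X_sub_C_coeff _ (by rw [hcard]; exact Nat.sub_le n _),
    hcard, Nat.sub_sub_self k.2, ← aeval_esymm_eq_multiset_esymm (Fin n) F]
  rfl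

lemma exists_eval_phiMap_eq {H : MvPolynomial (Fin n) F} (hH : H.IsSymmetric) :
    ∃ g : MvPolynomial (Fin n) F, ∀ (A : Matrix (Fin n) (Fin n) F) (μ : Fin n → F),
      A.charpoly = ∏ i, (Polynomial.X - Polynomial.C (μ i)) → eval (phiMap A) g = eval μ H := by
  obtain ⟨G, hG⟩ := esymmAlgHom_surjective F (σ := Fin n) (n := n) (by simp)
    ⟨H, (mem_symmetricSubalgebra H).mpr hH⟩
  have hGH : aeval (fun k : Fin n => esymm (Fin n) F ((k : ℕ) + 1)) G = H := by
    rw [← esymmAlgHom_apply, hG]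
  refine ⟨aeval (fun k : Fin n => C ((-1) ^ ((k : ℕ) + 1)) * X k) G, fun A μ hA => ?_⟩
  have hsign (k : Fin n) : eval (phiMap A) (C ((-1) ^ ((k : ℕ) + 1)) * X k)
      = eval μ (esymm (Fin n) F ((k : ℕ) + 1)) := by
    rw [map_mul, eval_C, eval_X, phiMap_eq_neg_one_pow_mul_esymm hA, ← mul_assoc, ← pow_add,
      Even.neg_one_pow ⟨_, rfl⟩, one_mul]
  rw [← hGH, eval_aeval, eval_aeval]
  simp only [hsign]

noncomputable def phiPoly (F : Type) [Field F] (n : ℕ) (k : Fin n) :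
    MvPolynomial (Fin n × Fin n) F :=
  (Matrix.charpoly.univ F (Fin n)).coeff (n - ((k : ℕ) + 1))

lemma evalMat_aeval_phiPoly (g : MvPolynomial (Fin n) F) (A : Matrix (Fin n) (Fin n) F) :
    evalMat (aeval (phiPoly F n) g) A = eval (phiMap A) g := by
  have hcoeff : (fun k => evalMat (phiPoly F n k) A) = phiMap A :=
    funext fun k => Matrix.charpoly.univ_coeff_eval₂Hom (Fin n) (RingHom.id F) _ _
  rw [evalMat, eval_aeval, ← hcoeff]
  rfl

lemma eq_zero_of_forall_evalMat_eq_zero [Infinite F] {q : MvPolynomial (Fin n × Fin n) F}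
    (hq : ∀ A, evalMat q A = 0) : q = 0 :=
  MvPolynomial.funext fun x => hq (Matrix.of (Function.curry x))

lemma ne_zero_of_forall_evalMat_eq [Infinite F] {D : MvPolynomial (Fin n × Fin n) F}
    {H : MvPolynomial (Fin n) F} (hH : H ≠ 0)
    (hD : ∀ (A : Matrix (Fin n) (Fin n) F) (μ : Fin n → F),
      A.charpoly = ∏ i, (Polynomial.X - Polynomial.C (μ i)) → evalMat D A = eval μ H) :
    D ≠ 0 := by
  rintro rfl
  refine hH (MvPolynomial.funext fun μ => ?_)
  rw [← hD _ μ (Matrix.charpoly_diagonal μ), evalMat, map_zero, map_zero]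

lemma exists_ne_zero_eval_phiMap_eq [Infinite F] {H : MvPolynomial (Fin n) F}
    (hH : H.IsSymmetric) (hH0 : H ≠ 0) :
    ∃ g : MvPolynomial (Fin n) F, g ≠ 0 ∧ ∀ (A : Matrix (Fin n) (Fin n) F) (μ : Fin n → F),
      A.charpoly = ∏ i, (Polynomial.X - Polynomial.C (μ i)) → eval (phiMap A) g = eval μ H := by
  obtain ⟨g, hg⟩ := exists_eval_phiMap_eq hH
  have hD := ne_zero_of_forall_evalMat_eq hH0
    fun A μ hA => (evalMat_aeval_phiPoly g A).trans (hg A μ hA)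
  exact ⟨g, fun h => hD (by rw [h, map_zero]), hg⟩

end CharpolyCoefficients

section ConjugationInvariant

open MvPolynomial

variable {F : Type} [Field F] {n : ℕ}

def IsConjInvariant {ι : Type*} [Fintype ι] [DecidableEq ι] (Z : Set (Matrix ι ι F)) : Prop :=
  ∀ A ∈ Z, ∀ u : (Matrix ι ι F)ˣ, (u : Matrix ι ι F) * A * (↑u⁻¹ : Matrix ι ι F) ∈ Z

lemma IsConjInvariant.mem_iff_diagonal_mem {ι : Type*} [Fintype ι] [DecidableEq ι]
    {Z : Set (Matrix ι ι F)} (hZ : IsConjInvariant Z) {A : Matrix ι ι F} {μ : ι → F}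
    (hμ : Function.Injective μ) (hA : A.charpoly = ∏ i, (Polynomial.X - Polynomial.C (μ i))) :
    A ∈ Z ↔ diagonal μ ∈ Z := by
  obtain ⟨u, rfl⟩ := exists_units_eq_conj_diagonal hμ hA
  refine ⟨fun h => ?_, fun h => hZ _ h u⟩
  simpa [mul_assoc] using hZ _ h u⁻¹

noncomputable def restrictDiagonal (q : MvPolynomial (Fin n × Fin n) F) : MvPolynomial (Fin n) F :=
  aeval (fun ij : Fin n × Fin n => if ij.1 = ij.2 then X ij.1 else 0) q

lemma eval_restrictDiagonal (q : MvPolynomial (Fin n × Fin n) F) (μ : Fin n → F) :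
    eval μ (restrictDiagonal q) = evalMat q (diagonal μ) := by
  have hentries : (fun ij : Fin n × Fin n => eval μ (if ij.1 = ij.2 then X ij.1 else 0))
      = fun ij => diagonal μ ij.1 ij.2 := by
    funext ij
    split_ifs with h <;> simp [h]
  rw [restrictDiagonal, eval_aeval, hentries]
  rfl

lemma IsConjInvariant.eq_univ_of_diagonal_mem [IsAlgClosed F]
    {Z : Set (Matrix (Fin n) (Fin n) F)} (hZ : IsConjInvariant Z)
    {S : Set (MvPolynomial (Fin n × Fin n) F)} (hS : Z = {A | ∀ q ∈ S, evalMat q A = 0})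
    (hdiag : ∀ μ, diagonal μ ∈ Z) : Z = Set.univ := by
  obtain ⟨g, hg⟩ := exists_eval_phiMap_eq (permProd_isSymmetric (diffProd (Fin n) F))
  set D := aeval (phiPoly F n) g
  have hD A μ hA : evalMat D A = eval μ (permProd (diffProd (Fin n) F)) :=
    (evalMat_aeval_phiPoly g A).trans (hg A μ hA)
  have hD0 : D ≠ 0 := ne_zero_of_forall_evalMat_eq (permProd_ne_zero diffProd_ne_zero) hD
  have hqD (q) (hq : q ∈ S) : q * D = 0 := eq_zero_of_forall_evalMat_eq_zero fun A => by
    obtain ⟨μ, hA⟩ := exists_charpoly_eq_prod A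
    have hmul : evalMat (q * D) A = evalMat q A * evalMat D A := map_mul _ _ _
    rw [hmul]
    by_cases hμ : Function.Injective μ
    · have hAZ := (hZ.mem_iff_diagonal_mem hμ hA).2 (hdiag μ)
      rw [hS] at hAZ
      rw [hAZ q hq, zero_mul]
    · rw [hD A μ hA, eval_permProd_eq_zero_of_eval_eq_zero (eval_diffProd_eq_zero_iff.mpr hμ),
        mul_zero]
  rw [hS, Set.eq_univ_iff_forall]
  intro A q hq
  rw [(mul_eq_zero.mp (hqD q hq)).resolve_right hD0, evalMat, map_zero]

end ConjugationInvariant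

theorem phi_image_of_proper_closed_conj_invariant_general (F : Type) [Field F] [IsAlgClosed F]
    (n : ℕ) (Z : Set (Matrix (Fin n) (Fin n) F))
    (hZproper : Z ≠ Set.univ)
    (hZclosed : ∃ S : Set (MvPolynomial (Fin n × Fin n) F),
      Z = {X | ∀ q ∈ S, evalMat q X = 0})
    (hZconj : ∀ X ∈ Z, ∀ S : (Matrix (Fin n) (Fin n) F)ˣ,
      (S : Matrix (Fin n) (Fin n) F) * X *
        ((S⁻¹ : (Matrix (Fin n) (Fin n) F)ˣ) : Matrix (Fin n) (Fin n) F) ∈ Z) :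
    ∃ g : MvPolynomial (Fin n) F, g ≠ 0 ∧
      ∀ X ∈ Z, MvPolynomial.eval (phiMap X) g = 0 := by
  have hZ : IsConjInvariant Z := hZconj
  obtain ⟨S, hS⟩ := hZclosed
  obtain ⟨q, hqS, hq⟩ : ∃ q ∈ S, restrictDiagonal q ≠ 0 := by
    by_contra! h
    refine hZproper (hZ.eq_univ_of_diagonal_mem hS fun μ => ?_)
    rw [hS]
    intro q hq
    rw [← eval_restrictDiagonal, h q hq, map_zero]
  obtain ⟨g, hg0, hg⟩ := exists_ne_zero_eval_phiMap_eq
    (MvPolynomial.permProd_isSymmetric (MvPolynomial.diffProd (Fin n) F * restrictDiagonal q))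
    (MvPolynomial.permProd_ne_zero (mul_ne_zero MvPolynomial.diffProd_ne_zero hq))
  refine ⟨g, hg0, fun A hA => ?_⟩
  obtain ⟨μ, hμ⟩ := exists_charpoly_eq_prod A
  rw [hg A μ hμ]
  refine MvPolynomial.eval_permProd_eq_zero_of_eval_eq_zero ?_
  rw [map_mul, eval_restrictDiagonal]
  by_cases hinj : Function.Injective μ
  · have hdiag := (hZ.mem_iff_diagonal_mem hinj hμ).1 hA
    rw [hS] at hdiag
    rw [hdiag q hqS, mul_zero]
  · rw [MvPolynomial.eval_diffProd_eq_zero_iff.mpr hinj, zero_mul]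

theorem phi_image_of_proper_closed_conj_invariant (F : Type) [Field F] [IsAlgClosed F]
    [CharZero F] (n : ℕ) (hn : 2 ≤ n) (Z : Set (Matrix (Fin n) (Fin n) F))
    (hZproper : Z ≠ Set.univ)
    (hZclosed : ∃ S : Set (MvPolynomial (Fin n × Fin n) F),
      Z = {X | ∀ q ∈ S, evalMat q X = 0})
    (hZconj : ∀ X ∈ Z, ∀ S : (Matrix (Fin n) (Fin n) F)ˣ,
      (S : Matrix (Fin n) (Fin n) F) * X *
        ((S⁻¹ : (Matrix (Fin n) (Fin n) F)ˣ) : Matrix (Fin n) (Fin n) F) ∈ Z) :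
    ∃ g : MvPolynomial (Fin n) F, g ≠ 0 ∧
      ∀ X ∈ Z, MvPolynomial.eval (phiMap X) g = 0 :=
  phi_image_of_proper_closed_conj_invariant_general F n Z hZproper hZclosed hZconj
end

section
/- Let F be an algebraically closed field of characteristic zero, n ≥ 2, k ≥ 2, d ≥ 2, and let i_1, …, i_{k-1} ∈ {2, …, d}. Let f ∈ F⟨x_1,…,x_d⟩ be the right-normed Lie monomial f = [x_{i_1}, x_{i_2}, …, x_{i_{k-1}}, x_1] = [x_{i_1}, [x_{i_2}, [⋯, [x_{i_{k-1}}, x_1]⋯]]], where [a,b] = ab − ba. Then the image of f on M_n(F) equals M_n^0(F), the set of all trace-zero matrices in M_n(F). -/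
open Matrix

/-- Evaluation of a noncommutative polynomial at a tuple of `n × n` matrices. -/
noncomputable def ncEval {F : Type} [Field F] {d n : ℕ} (f : FreeAlgebra F (Fin d))
    (a : Fin d → Matrix (Fin n) (Fin n) F) : Matrix (Fin n) (Fin n) F :=
  FreeAlgebra.lift F a f

/-- The image of a noncommutative polynomial on `M_n(F)`. -/
noncomputable def ncImage {F : Type} [Field F] {d : ℕ} (n : ℕ) (f : FreeAlgebra F (Fin d)) :
    Set (Matrix (Fin n) (Fin n) F) :=
  Set.range fun a : Fin d → Matrix (Fin n) (Fin n) F => ncEval f a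

/-- The commutator `[a, b] = ab - ba`. -/
def br {A : Type} [Ring A] (a b : A) : A := a * b - b * a

/-!
A trace-zero matrix over a field of characteristic zero is similar to one with zero diagonal:
a transvection and a permutation put a zero in any chosen diagonal position, and induction on the
size treats the complementary block. For `D = diagonal μ` with distinct `μ i`, `ad_D ^ r`
multiplies the `(i, j)` entry by `(μ i - μ j) ^ r`, so every zero-diagonal `Y` is
`ad_D ^ (k - 1) Γ` for some `Γ`: substituting `x_1 ↦ Γ` and every other variable `↦ D` realises
`Y`, and the image of a polynomial is closed under similarity. Conversely every value is a
commutator, so it has trace zero.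
-/

namespace Matrix

section Similarity

variable {R : Type*} [CommRing R] {m : Type*} [Fintype m] [DecidableEq m]

theorem isConj_transvection_mul_mul {i j : m} (hij : i ≠ j) (t : R) (X : Matrix m m R) :
    IsConj X (transvection i j (-t) * X * transvection i j t) := by
  have hinv : ∀ s : R, transvection i j s * transvection i j (-s) = 1 := fun s => by
    rw [transvection_mul_transvection_same i j hij, add_neg_cancel, transvection_zero]
  refine ⟨⟨transvection i j (-t), transvection i j t, by simpa using hinv (-t), hinv t⟩, ?_⟩
  change _ * X = _ * X * _ * transvection i j (-t)
  rw [mul_assoc _ (transvection i j t), hinv t, mul_one]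

theorem isConj_submatrix (σ : Equiv.Perm m) (X : Matrix m m R) :
    IsConj X (X.submatrix σ σ) := by
  refine ⟨permMatrixHom.toHomUnits σ⁻¹, ?_⟩
  simp only [SemiconjBy, MonoidHom.coe_toHomUnits, permMatrixHom_apply, inv_inv,
    Equiv.Perm.permMatrix, PEquiv.toMatrix_toPEquiv_mul, PEquiv.mul_toMatrix_toPEquiv,
    submatrix_submatrix]
  simp

theorem isConj_fromBlocks {l : Type*} [Fintype l] [DecidableEq l] {A A' : Matrix l l R}
    (h : IsConj A A') (B : Matrix l m R) (C : Matrix m l R) (D : Matrix m m R) :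
    ∃ B' C', IsConj (fromBlocks A B C D) (fromBlocks A' B' C' D) := by
  obtain ⟨u, hu⟩ := h
  refine ⟨(u : Matrix l l R) * B, C * (↑u⁻¹ : Matrix l l R),
    ⟨⟨fromBlocks u 0 0 1, fromBlocks ↑u⁻¹ 0 0 1, ?_, ?_⟩, ?_⟩⟩
  · simp [fromBlocks_multiply, fromBlocks_one]
  · simp [fromBlocks_multiply, fromBlocks_one]
  · simp [SemiconjBy, fromBlocks_multiply, hu.eq]

theorem trace_eq_of_isConj {X Y : Matrix m m R} (h : IsConj X Y) : X.trace = Y.trace := by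
  obtain ⟨u, hu⟩ := h
  rw [← trace_units_conj u X, hu.eq, mul_assoc, Units.mul_inv, mul_one]

end Similarity

section ZeroDiagonal

variable {F : Type*} [Field F] {m : Type*} [Fintype m] [DecidableEq m]

theorem exists_isConj_apply_self_eq_zero_of_apply_ne_zero {X : Matrix m m F} {i j : m}
    (hij : i ≠ j) (h : X j i ≠ 0) (z : m) : ∃ Y, IsConj X Y ∧ Y z z = 0 := by
  set Y := transvection i j (-(X i i / X j i)) * X * transvection i j (X i i / X j i)
  have hY : Y i i = 0 := by simp [Y, hij, h]
  refine ⟨Y.submatrix (Equiv.swap z i) (Equiv.swap z i),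
    (isConj_transvection_mul_mul hij _ X).trans (isConj_submatrix _ Y), ?_⟩
  simpa using hY

theorem exists_isConj_apply_self_eq_zero [CharZero F] {X : Matrix m m F} (hX : X.trace = 0)
    (z : m) : ∃ Y, IsConj X Y ∧ Y z z = 0 := by
  by_cases hoff : ∃ i j, i ≠ j ∧ X j i ≠ 0
  · obtain ⟨i, j, hij, h⟩ := hoff
    exact exists_isConj_apply_self_eq_zero_of_apply_ne_zero hij h z
  push Not at hoff
  by_cases hscalar : ∀ a, X a a = X z z
  · refine ⟨X, .refl X, ?_⟩
    have hcard : (Fintype.card m : F) * X z z = 0 := by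
      simpa [trace, hscalar] using hX
    have hcard_ne : (Fintype.card m : F) ≠ 0 := Nat.cast_ne_zero.2 (Fintype.card_pos_iff.2 ⟨z⟩).ne'
    exact (mul_eq_zero.1 hcard).resolve_left hcard_ne
  push Not at hscalar
  obtain ⟨a, ha⟩ := hscalar
  have haz : a ≠ z := by rintro rfl; exact ha rfl
  -- a shear turns the unequal diagonal entries `X a a`, `X z z` into an off-diagonal entry
  set Y := transvection a z (-1) * X * transvection a z 1
  have hY : Y a z ≠ 0 := by
    simpa [Y, haz, hoff a z haz, hoff z a haz.symm, neg_add_eq_zero] using Ne.symm ha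
  obtain ⟨W, hYW, hW⟩ := exists_isConj_apply_self_eq_zero_of_apply_ne_zero haz.symm hY z
  exact ⟨W, (isConj_transvection_mul_mul haz 1 X).trans hYW, hW⟩

theorem exists_isConj_diag_eq_zero_sum_unit [CharZero F] {l : Type*} [Fintype l] [DecidableEq l]
    (ih : ∀ A : Matrix l l F, A.trace = 0 → ∃ A', IsConj A A' ∧ A'.diag = 0)
    {X : Matrix (l ⊕ Unit) (l ⊕ Unit) F} (hX : X.trace = 0) :
    ∃ Y, IsConj X Y ∧ Y.diag = 0 := by
  obtain ⟨Y, hXY, hY⟩ := exists_isConj_apply_self_eq_zero hX (Sum.inr ())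
  have hA : Y.toBlocks₁₁.trace = 0 := by
    simpa [trace, Fintype.sum_sum_type, hY, toBlocks₁₁] using
      (trace_eq_of_isConj hXY).symm.trans hX
  obtain ⟨A', hAA', hA'⟩ := ih _ hA
  obtain ⟨B', C', hYZ⟩ := isConj_fromBlocks hAA' Y.toBlocks₁₂ Y.toBlocks₂₁ Y.toBlocks₂₂
  rw [fromBlocks_toBlocks] at hYZ
  refine ⟨_, hXY.trans hYZ, ?_⟩
  funext p
  rcases p with i | j
  · simpa using congrFun hA' i
  · exact hY

theorem exists_isConj_diag_eq_zero_of_equiv {l l' : Type*} [Fintype l] [DecidableEq l]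
    [Fintype l'] [DecidableEq l'] (e : l ≃ l')
    (h : ∀ A : Matrix l l F, A.trace = 0 → ∃ A', IsConj A A' ∧ A'.diag = 0)
    {X : Matrix l' l' F} (hX : X.trace = 0) : ∃ Y, IsConj X Y ∧ Y.diag = 0 := by
  have htr : (reindex e.symm e.symm X).trace = 0 := by
    rw [← hX]
    exact Fintype.sum_equiv e _ _ fun _ => by simp
  obtain ⟨Y, hXY, hY⟩ := h _ htr
  refine ⟨reindex e e Y, by simpa using (reindexRingEquiv F e).toMonoidHom.map_isConj hXY, ?_⟩
  funext i
  simpa using congrFun hY (e.symm i)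

theorem exists_isConj_diag_eq_zero [CharZero F] {X : Matrix m m F} (hX : X.trace = 0) :
    ∃ Y, IsConj X Y ∧ Y.diag = 0 := by
  refine Fintype.induction_empty_option
    (P := fun l _ => ∀ [DecidableEq l] (X : Matrix l l F), X.trace = 0 →
      ∃ Y, IsConj X Y ∧ Y.diag = 0) ?_ ?_ ?_ m X hX
  · intro l l' _ e ih _ X hX
    let _ := Fintype.ofEquiv l' e.symm
    classical
    exact exists_isConj_diag_eq_zero_of_equiv e (ih ·) hX
  · intro _ X _
    exact ⟨X, .refl X, funext (PEmpty.elim ·)⟩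
  · intro l _ ih _ X hX
    classical
    exact exists_isConj_diag_eq_zero_of_equiv (Equiv.optionEquivSumPUnit l).symm
      (fun _ hA => exists_isConj_diag_eq_zero_sum_unit ih hA) hX

end ZeroDiagonal

section Commutator

variable {R : Type} [CommRing R] {m : Type} [Fintype m] [DecidableEq m]

theorem trace_foldr_br_of_ne_nil {l : List (Matrix m m R)} (hl : l ≠ []) (Z : Matrix m m R) :
    (l.foldr br Z).trace = 0 := by
  obtain ⟨A, l, rfl⟩ := List.exists_cons_of_ne_nil hl
  simp [br, trace_mul_comm A]

theorem foldr_br_replicate_diagonal (μ : m → R) (M : Matrix m m R) (r : ℕ) :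
    (List.replicate r (diagonal μ)).foldr br M = of fun i j => (μ i - μ j) ^ r * M i j := by
  induction r with
  | zero => ext; simp
  | succ r ih =>
    ext i j
    simp only [List.replicate_succ, List.foldr_cons, br, ih, sub_apply, diagonal_mul, of_apply,
      mul_diagonal]
    ring

theorem exists_foldr_br_replicate_diagonal_eq {F : Type} [Field F] {μ : m → F}
    (hμ : Function.Injective μ) {Y : Matrix m m F} (hY : Y.diag = 0) (r : ℕ) :
    ∃ Γ, (List.replicate r (diagonal μ)).foldr br Γ = Y := by
  refine ⟨of fun i j => Y i j / (μ i - μ j) ^ r, ?_⟩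
  ext i j
  rw [foldr_br_replicate_diagonal]
  obtain rfl | hij := eq_or_ne i j
  · simp [show Y i i = 0 from congrFun hY i]
  · simp [mul_div_cancel₀, sub_ne_zero.2 (hμ.ne hij)]

end Commutator

end Matrix

theorem map_foldr_br {A B : Type} {G : Type*} [Ring A] [Ring B] [FunLike G A B] [RingHomClass G A B]
    (φ : G) (l : List A) (z : A) : φ (l.foldr br z) = (l.map φ).foldr br (φ z) := by
  induction l with
  | nil => rfl
  | cons x l ih => simp [br, ih]

theorem FreeAlgebra.lift_units_conj {R X A : Type*} [CommRing R] [Ring A] [Algebra R A]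
    (u : Aˣ) (a : X → A) (f : FreeAlgebra R X) :
    lift R (fun s => (u : A) * a s * ↑u⁻¹) f = u * lift R a f * ↑u⁻¹ := by
  induction f using FreeAlgebra.induction with
  | grade0 c => simp [Algebra.commutes, mul_assoc]
  | grade1 s => simp
  | add f g hf hg => simp [hf, hg, mul_add, add_mul]
  | mul f g hf hg => rw [map_mul, map_mul, hf, hg]; simp [mul_assoc]

variable {F : Type} [Field F] {d n : ℕ}

theorem ncEval_foldr_br_ofFn {r : ℕ} (idx : Fin r → Fin d) (j : Fin d)
    (a : Fin d → Matrix (Fin n) (Fin n) F) :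
    ncEval ((List.ofFn fun t => FreeAlgebra.ι F (idx t)).foldr br (FreeAlgebra.ι F j)) a =
      (List.ofFn fun t => a (idx t)).foldr br (a j) := by
  simp [ncEval, map_foldr_br, List.map_ofFn, Function.comp_def]

theorem mem_ncImage_of_isConj {f : FreeAlgebra F (Fin d)} {X Y : Matrix (Fin n) (Fin n) F}
    (hY : Y ∈ ncImage n f) (h : IsConj X Y) : X ∈ ncImage n f := by
  obtain ⟨a, rfl⟩ := hY
  obtain ⟨u, hu⟩ := h.symm
  refine ⟨fun s => (u : Matrix _ _ F) * a s * (↑u⁻¹ : Matrix _ _ F), ?_⟩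
  change ncEval f _ = X
  rw [ncEval, FreeAlgebra.lift_units_conj, ← ncEval, hu.eq, Units.mul_inv_cancel_right]

/-- With the variables of `F⟨x_1, …, x_d⟩` indexed by `Fin d` (so `x_1` is the variable of
index `0` and `x_2, …, x_d` are the variables of nonzero index), the right-normed Lie
monomial `[x_{i_1}, x_{i_2}, …, x_{i_{k-1}}, x_1]` with `i_1, …, i_{k-1} ∈ {2, …, d}`
has image `M_n^0(F)`, the trace-zero matrices. -/
theorem rightNormed_lie_monomial_image (F : Type) [Field F] [CharZero F]
    (n d k : ℕ) (hd : 2 ≤ d) (hk : 2 ≤ k)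
    (idx : Fin (k - 1) → Fin d) (hidx : ∀ t, idx t ≠ ⟨0, by omega⟩) :
    ncImage n ((List.ofFn fun t : Fin (k - 1) => FreeAlgebra.ι F (idx t)).foldr br
        (FreeAlgebra.ι F ⟨0, by omega⟩)) =
      {X : Matrix (Fin n) (Fin n) F | Matrix.trace X = 0} := by
  ext X
  constructor
  · rintro ⟨a, rfl⟩
    change (ncEval _ a).trace = 0
    rw [ncEval_foldr_br_ofFn]
    exact trace_foldr_br_of_ne_nil (by simp only [ne_eq, List.ofFn_eq_nil_iff]; omega) _
  · intro hX
    obtain ⟨Y, hXY, hY⟩ := exists_isConj_diag_eq_zero hX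
    refine mem_ncImage_of_isConj ?_ hXY
    let μ : Fin n → F := fun i => (i : ℕ)
    have hμ : Function.Injective μ := Nat.cast_injective.comp Fin.val_injective
    obtain ⟨Γ, hΓ⟩ := exists_foldr_br_replicate_diagonal_eq hμ hY (k - 1)
    refine ⟨Function.update (fun _ => diagonal μ) ⟨0, by omega⟩ Γ, ?_⟩
    simp [ncEval_foldr_br_ofFn, Function.update_of_ne (hidx _), hΓ]
end

section
/- Let F be an algebraically closed field of characteristic zero, n ≥ 2, and let α, β ∈ F be not both zero. Let f ∈ F⟨x_1,x_2,x_3⟩ be f(x_1,x_2,x_3) = α·[x_3,[x_2,x_1]] + β·[x_2,[x_3,x_1]], where [a,b] = ab − ba. Then the image of f on M_n(F) equals M_n^0(F), the set of all trace-zero matrices in M_n(F). -/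
open Matrix

/-!
A trace-zero matrix is similar to one with zero diagonal: if `φ` is not scalar, pick `v` with
`v, φ v` independent, split `V` as `F v ⊕ W` with `φ v ∈ W`, and induct on the compression of `φ`
to `W` (a traceless scalar is zero in characteristic zero). For `D` diagonal with distinct
entries, `[D, ·]` is bijective on zero-diagonal matrices, so every traceless `X` is `[A, [A, Y]]`
with `A` conjugate to a traceless `D`. If `α + β ≠ 0` take `x_2 = x_3 = A`; if `α + β = 0` then
`f = α [[x_3, x_2], x_1]` by Jacobi, and the traceless `A` is itself a commutator.
-/

open Module

namespace Module.Dual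

variable {F V : Type*} [Field F] [AddCommGroup V] [Module F V]

theorem exists_eq_one_eq_zero_of_linearIndependent {x y : V} (h : LinearIndependent F ![x, y]) :
    ∃ ℓ : Dual F V, ℓ x = 1 ∧ ℓ y = 0 := by
  have hx : x ∉ F ∙ y := by
    rintro hxy
    obtain ⟨c, rfl⟩ := Submodule.mem_span_singleton.mp hxy
    have := LinearIndependent.pair_iff.mp h 1 (-c) (by rw [neg_smul, one_smul, add_neg_cancel])
    exact one_ne_zero this.1
  obtain ⟨f, hfx, hfy⟩ := Submodule.exists_dual_map_eq_bot_of_notMem hx inferInstance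
  have hfy : f y = 0 := by
    simpa [hfy] using Submodule.mem_map_of_mem (f := f) (Submodule.mem_span_singleton_self y)
  exact ⟨(f x)⁻¹ • f, inv_mul_cancel₀ hfx, by simp [hfy]⟩

variable {ℓ : Dual F V} {v : V} (hv : ℓ v = 1)

def projKer : V →ₗ[F] LinearMap.ker ℓ :=
  LinearMap.codRestrict _ (LinearMap.id - ℓ.smulRight v) fun x => by
    simp [LinearMap.mem_ker, hv]

theorem projKer_apply (x : V) : (projKer hv x : V) = x - ℓ x • v := rfl

theorem projKer_self : projKer hv v = 0 := by
  ext; simp [projKer_apply, hv]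

theorem projKer_of_mem_ker {x : V} (hx : x ∈ LinearMap.ker ℓ) : projKer hv x = ⟨x, hx⟩ := by
  ext; simp [projKer_apply, LinearMap.mem_ker.mp hx]

variable {n : ℕ} (bW : Basis (Fin n) F (LinearMap.ker ℓ))

noncomputable def basisCons : Basis (Fin (n + 1)) F V :=
  Basis.mkFinCons v bW
    (fun c x hx hcx => by simpa [hv, LinearMap.mem_ker.mp hx] using congrArg ℓ hcx)
    (fun z => ⟨-ℓ z, by simp [hv]⟩)

theorem basisCons_zero : basisCons hv bW 0 = v := by simp [basisCons]

theorem basisCons_succ (i : Fin n) : basisCons hv bW i.succ = bW i := by simp [basisCons]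

theorem basisCons_coord_zero : (basisCons hv bW).coord 0 = ℓ := by
  refine (basisCons hv bW).ext fun i => ?_
  rw [Basis.coord_apply, Basis.repr_self]
  cases i using Fin.cases with
  | zero => simp [basisCons_zero, hv]
  | succ i => simp [basisCons_succ, (Fin.succ_ne_zero i).symm]

theorem basisCons_coord_succ (i : Fin n) :
    (basisCons hv bW).coord i.succ = bW.coord i ∘ₗ projKer hv := by
  refine (basisCons hv bW).ext fun j => ?_
  rw [Basis.coord_apply, Basis.repr_self]
  cases j using Fin.cases with
  | zero => simp [basisCons_zero, projKer_self]
  | succ j =>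
    simp [basisCons_succ, projKer_of_mem_ker hv (bW j).2, Finsupp.single_apply, eq_comm]

variable (φ : Module.End F V)

noncomputable def compress : Module.End F (LinearMap.ker ℓ) :=
  projKer hv ∘ₗ φ ∘ₗ (LinearMap.ker ℓ).subtype

theorem toMatrix_basisCons_zero_zero :
    LinearMap.toMatrix (basisCons hv bW) (basisCons hv bW) φ 0 0 = ℓ (φ v) := by
  rw [LinearMap.toMatrix_apply, ← Basis.coord_apply, basisCons_coord_zero, basisCons_zero]

theorem toMatrix_basisCons_succ_succ (i j : Fin n) :
    LinearMap.toMatrix (basisCons hv bW) (basisCons hv bW) φ i.succ j.succ =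
      LinearMap.toMatrix bW bW (compress hv φ) i j := by
  rw [LinearMap.toMatrix_apply, LinearMap.toMatrix_apply, ← Basis.coord_apply,
    basisCons_coord_succ, basisCons_succ]
  rfl

theorem trace_eq_apply_add_trace_compress [FiniteDimensional F V] :
    LinearMap.trace F V φ = ℓ (φ v) + LinearMap.trace F _ (compress hv φ) := by
  let bW := Module.finBasis F (LinearMap.ker ℓ)
  rw [LinearMap.trace_eq_matrix_trace F (basisCons hv bW), LinearMap.trace_eq_matrix_trace F bW,
    Matrix.trace, Fin.sum_univ_succ]
  simp only [Matrix.diag, toMatrix_basisCons_zero_zero, toMatrix_basisCons_succ_succ]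
  rfl

end Module.Dual

namespace LinearMap

variable {F V : Type*} [Field F] [CharZero F] [AddCommGroup V] [Module F V]
  [FiniteDimensional F V]

theorem eq_zero_of_trace_eq_zero_of_forall_not_linearIndependent {φ : Module.End F V}
    (hφ : ∀ v, ¬LinearIndependent F ![v, φ v]) (htr : trace F V φ = 0) : φ = 0 := by
  obtain ⟨a, rfl⟩ := exists_eq_smul_id_of_forall_notLinearIndependent hφ
  rcases subsingleton_or_nontrivial V with hV | hV
  · exact Subsingleton.elim _ _
  rw [map_smul, trace_one, smul_eq_mul, mul_eq_zero, Nat.cast_eq_zero] at htr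
  simp [htr.resolve_right Module.finrank_pos.ne']

theorem exists_basis_toMatrix_diag_eq_zero {n : ℕ} (hV : finrank F V = n) (φ : Module.End F V)
    (htr : trace F V φ = 0) : ∃ b : Basis (Fin n) F V, ∀ i, toMatrix b b φ i i = 0 := by
  induction n generalizing V with
  | zero => exact ⟨Module.finBasisOfFinrankEq F V hV, fun i => i.elim0⟩
  | succ n ih =>
    by_cases hφ : ∀ v, ¬LinearIndependent F ![v, φ v]
    · refine ⟨Module.finBasisOfFinrankEq F V hV, fun i => ?_⟩
      simp [eq_zero_of_trace_eq_zero_of_forall_not_linearIndependent hφ htr]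
    obtain ⟨v, hv⟩ := not_forall_not.mp hφ
    obtain ⟨ℓ, hℓv, hℓφv⟩ := Module.Dual.exists_eq_one_eq_zero_of_linearIndependent hv
    have hW : finrank F (ker ℓ) = n := by
      have := Module.Dual.finrank_ker_add_one_of_ne_zero (f := ℓ) (by rintro rfl; simp at hℓv)
      omega
    have htrW : trace F _ (Module.Dual.compress hℓv φ) = 0 := by
      rwa [Module.Dual.trace_eq_apply_add_trace_compress hℓv, hℓφv, zero_add] at htr
    obtain ⟨bW, hbW⟩ := ih hW _ htrW
    refine ⟨Module.Dual.basisCons hℓv bW, fun i => ?_⟩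
    cases i using Fin.cases with
    | zero => rw [Module.Dual.toMatrix_basisCons_zero_zero, hℓφv]
    | succ i => rw [Module.Dual.toMatrix_basisCons_succ_succ, hbW]

end LinearMap

section Commutator

variable {A : Type} [Ring A]

theorem br_jacobi (a b c : A) : br c (br b a) - br b (br c a) = br (br c b) a := by
  simp only [br]; noncomm_ring

theorem br_smul_right {R : Type} [CommSemiring R] [Algebra R A] (c : R) (a b : A) :
    br a (c • b) = c • br a b := by
  rw [br, br, mul_smul_comm, smul_mul_assoc, smul_sub]

theorem br_units_conj (g : Aˣ) (a b : A) :
    br (g * a * ↑g⁻¹) (g * b * ↑g⁻¹) = g * br a b * ↑g⁻¹ := by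
  simp only [br, mul_assoc, Units.inv_mul_cancel_left, mul_sub, sub_mul]

end Commutator

namespace Matrix

variable {F : Type} [Field F]

theorem trace_br {ι : Type} [Fintype ι] [DecidableEq ι] (a b : Matrix ι ι F) : (br a b).trace = 0 := by
  rw [br, trace_sub, trace_mul_comm, sub_self]

theorem br_diagonal_apply {ι : Type} [Fintype ι] [DecidableEq ι] (d : ι → F)
    (Y : Matrix ι ι F) (i j : ι) : br (diagonal d) Y i j = (d i - d j) * Y i j := by
  rw [br, sub_apply, diagonal_mul, mul_diagonal]
  ring

theorem exists_br_diagonal_eq {ι : Type} [Fintype ι] [DecidableEq ι] {d : ι → F}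
    (hd : Function.Injective d) {Z : Matrix ι ι F} (hZ : ∀ i, Z i i = 0) :
    ∃ Y : Matrix ι ι F, (∀ i, Y i i = 0) ∧ br (diagonal d) Y = Z := by
  refine ⟨of fun i j => Z i j / (d i - d j), fun i => by simp [hZ i], ?_⟩
  ext i j
  rw [br_diagonal_apply, of_apply]
  rcases eq_or_ne i j with rfl | hij
  · simp [hZ i]
  · exact mul_div_cancel₀ _ (sub_ne_zero.mpr (hd.ne hij))

variable [CharZero F] {n : ℕ}

theorem exists_injective_sum_eq_zero : ∃ d : Fin n → F, Function.Injective d ∧ ∑ i, d i = 0 := by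
  refine ⟨fun i => 2 * (i : F) - (n - 1), fun i j hij => Fin.ext (by simpa using hij), ?_⟩
  rw [Fin.sum_univ_eq_sum_range (fun i => 2 * (i : F) - (n - 1)), Finset.sum_sub_distrib,
    Finset.sum_const, Finset.card_range, nsmul_eq_mul, sub_eq_zero]
  induction n with
  | zero => simp
  | succ n ih => rw [Finset.sum_range_succ, ih]; push_cast; ring

theorem exists_units_conj_diag_eq_zero {X : Matrix (Fin n) (Fin n) F} (hX : X.trace = 0) :
    ∃ (g : (Matrix (Fin n) (Fin n) F)ˣ) (Z : Matrix (Fin n) (Fin n) F),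
      (∀ i, Z i i = 0) ∧ X = g * Z * (g⁻¹ : (Matrix (Fin n) (Fin n) F)ˣ) := by
  let e := Pi.basisFun F (Fin n)
  obtain ⟨b, hb⟩ := LinearMap.exists_basis_toMatrix_diag_eq_zero (Module.finrank_fin_fun F)
    (toLin e e X) (by rwa [LinearMap.trace_eq_matrix_trace F e, LinearMap.toMatrix_toLin])
  refine ⟨⟨e.toMatrix b, b.toMatrix e, e.toMatrix_mul_toMatrix_flip b,
    b.toMatrix_mul_toMatrix_flip e⟩, _, hb, ?_⟩
  rw [Units.inv_mk, basis_toMatrix_mul_linearMap_toMatrix_mul_basis_toMatrix,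
    LinearMap.toMatrix_toLin]

theorem exists_eq_br_br {X : Matrix (Fin n) (Fin n) F} (hX : X.trace = 0) :
    ∃ A Y : Matrix (Fin n) (Fin n) F, A.trace = 0 ∧ X = br A (br A Y) := by
  obtain ⟨d, hd, hsum⟩ := exists_injective_sum_eq_zero (F := F) (n := n)
  obtain ⟨g, Z, hZ, rfl⟩ := exists_units_conj_diag_eq_zero hX
  obtain ⟨Y₁, hY₁, rfl⟩ := exists_br_diagonal_eq hd hZ
  obtain ⟨Y₂, -, rfl⟩ := exists_br_diagonal_eq hd hY₁
  refine ⟨g * diagonal d * (g⁻¹ : (Matrix (Fin n) (Fin n) F)ˣ),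
    g * Y₂ * (g⁻¹ : (Matrix (Fin n) (Fin n) F)ˣ), by rwa [trace_units_conj, trace_diagonal], ?_⟩
  rw [br_units_conj, br_units_conj]

end Matrix

section LieDeg3

variable {F : Type} [Field F]

noncomputable def lieDeg3 (α β : F) : FreeAlgebra F (Fin 3) :=
  α • br (FreeAlgebra.ι F 2) (br (FreeAlgebra.ι F 1) (FreeAlgebra.ι F 0)) +
    β • br (FreeAlgebra.ι F 1) (br (FreeAlgebra.ι F 2) (FreeAlgebra.ι F 0))

theorem ncEval_lieDeg3 {n : ℕ} (α β : F) (a : Fin 3 → Matrix (Fin n) (Fin n) F) :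
    ncEval (lieDeg3 α β) a = α • br (a 2) (br (a 1) (a 0)) + β • br (a 1) (br (a 2) (a 0)) := by
  simp [ncEval, lieDeg3, br]

end LieDeg3

theorem multilinear_lie_deg3_image_general (F : Type) [Field F] [CharZero F]
    (n : ℕ) (α β : F) (hαβ : ¬ (α = 0 ∧ β = 0)) :
    ncImage n
        (α • br (FreeAlgebra.ι F (2 : Fin 3))
              (br (FreeAlgebra.ι F (1 : Fin 3)) (FreeAlgebra.ι F (0 : Fin 3))) +
         β • br (FreeAlgebra.ι F (1 : Fin 3))
              (br (FreeAlgebra.ι F (2 : Fin 3)) (FreeAlgebra.ι F (0 : Fin 3)))) =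
      {X : Matrix (Fin n) (Fin n) F | Matrix.trace X = 0} := by
  change ncImage n (lieDeg3 α β) = _
  ext X
  simp only [ncImage, Set.mem_range, ncEval_lieDeg3, Set.mem_ofPred_eq]
  refine ⟨fun ⟨a, ha⟩ => by simp [← ha, Matrix.trace_br], fun hX => ?_⟩
  rcases eq_or_ne (α + β) 0 with hsum | hsum
  · -- Here `f = α [[x_3, x_2], x_1]` by the Jacobi identity.
    have hα : α ≠ 0 := fun h => hαβ ⟨h, by simpa [h] using hsum⟩
    obtain ⟨A, Y, hA, rfl⟩ := exists_eq_br_br hX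
    obtain ⟨C, Y', -, rfl⟩ := exists_eq_br_br hA
    refine ⟨![α⁻¹ • br (br C (br C Y')) Y, br C Y', C], ?_⟩
    simp only [Matrix.cons_val_zero, Matrix.cons_val_one, Matrix.cons_val_two, Matrix.tail_cons,
      Matrix.head_cons]
    rw [eq_neg_of_add_eq_zero_right hsum, neg_smul, ← sub_eq_add_neg, ← smul_sub, br_jacobi,
      br_smul_right, smul_smul, mul_inv_cancel₀ hα, one_smul]
  · obtain ⟨A, Y, -, hY⟩ := exists_eq_br_br (X := (α + β)⁻¹ • X) (by simp [hX])
    refine ⟨![Y, A, A], ?_⟩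
    simp only [Matrix.cons_val_zero, Matrix.cons_val_one, Matrix.cons_val_two, Matrix.tail_cons,
      Matrix.head_cons]
    rw [← add_smul, ← hY, smul_smul, mul_inv_cancel₀ hsum, one_smul]

/-- In `F⟨x_1, x_2, x_3⟩` the variables `x_1, x_2, x_3` are indexed by `0, 1, 2 : Fin 3`.
A general nonzero multilinear Lie polynomial of degree 3,
`f = α [x_3, [x_2, x_1]] + β [x_2, [x_3, x_1]]`, has image `M_n^0(F)`. -/
theorem multilinear_lie_deg3_image (F : Type) [Field F] [IsAlgClosed F] [CharZero F]
    (n : ℕ) (hn : 2 ≤ n) (α β : F) (hαβ : ¬ (α = 0 ∧ β = 0)) :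
    ncImage n
        (α • br (FreeAlgebra.ι F (2 : Fin 3))
              (br (FreeAlgebra.ι F (1 : Fin 3)) (FreeAlgebra.ι F (0 : Fin 3))) +
         β • br (FreeAlgebra.ι F (1 : Fin 3))
              (br (FreeAlgebra.ι F (2 : Fin 3)) (FreeAlgebra.ι F (0 : Fin 3)))) =
      {X : Matrix (Fin n) (Fin n) F | Matrix.trace X = 0} :=
  multilinear_lie_deg3_image_general F n α β hαβ
end
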